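/- arXiv:2407.07806 — 3 statements merged into one kernel-verified Lean document; each statement's English description precedes it below -/
import Mathlib

section
/- Let m ∈ ℕ, D > m, and let f be a bounded nonnegative measurable function on (0, ∞) with bounded support. Define g(t) = ∫_t^∞ f(τ) τ^{m/D − m} (τ − t)^{m−1} dτ for t ≥ 0. Then g is (m−1)-times continuously differentiable on (0, ∞), and for every j ∈ {1, …, m−1}, g^{(j)}(t) = (−1)^j ((m−1)!/(m−j−1)!) ∫_t^∞ f(τ) τ^{m/D − m} (τ − t)^{m−j−1} dτ. Moreover, g^{(m−1)} is locally Lipschitz on (0, ∞) and g^{(m)}(t) = (−1)^m (m−1)! f(t) t^{m/D − m} for almost every t ∈ (0, ∞). -/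
open MeasureTheory Set Filter Topology ENNReal NNReal

noncomputable section

/-- The nonincreasing rearrangement `f*_μ(t) = inf { l | μ {|f| > l} ≤ t }`
for an `ℝ≥0∞`-valued function. -/
def erearr {α : Type*} [MeasurableSpace α] (μ : Measure α) (f : α → ℝ≥0∞) (t : ℝ≥0∞) : ℝ≥0∞ :=
  sInf {l : ℝ≥0∞ | μ {x | l < f x} ≤ t}

/-- Lebesgue measure on `(0, ∞)`. -/
def mIoi : Measure ℝ := volume.restrict (Set.Ioi 0)

/-- The nonincreasing rearrangement, viewed as a function on `(0, ∞) ⊆ ℝ`. -/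
def rstar {α : Type*} [MeasurableSpace α] (μ : Measure α) (f : α → ℝ≥0∞) (t : ℝ) : ℝ≥0∞ :=
  erearr μ f (ENNReal.ofReal t)

/-- The maximal nonincreasing rearrangement `f**_μ(t) = (1/t) ∫_0^t f*_μ`. -/
def dstar {α : Type*} [MeasurableSpace α] (μ : Measure α) (f : α → ℝ≥0∞) (t : ℝ) : ℝ≥0∞ :=
  (ENNReal.ofReal t)⁻¹ * ∫⁻ τ in Set.Ioo (0:ℝ) t, rstar μ f τ

/-- `ρ` is a rearrangement-invariant Banach function norm on `M⁺(R, μ)`. -/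
structure IsRIBFN {α : Type*} [MeasurableSpace α] (μ : Measure α)
    (ρ : (α → ℝ≥0∞) → ℝ≥0∞) : Prop where
  norm_zero : ∀ f : α → ℝ≥0∞, Measurable f → (ρ f = 0 ↔ f =ᵐ[μ] 0)
  norm_smul : ∀ (c : ℝ≥0) (f : α → ℝ≥0∞), ρ (fun x => (c : ℝ≥0∞) * f x) = (c : ℝ≥0∞) * ρ f
  norm_add : ∀ f g : α → ℝ≥0∞, ρ (fun x => f x + g x) ≤ ρ f + ρ g
  lattice : ∀ f g : α → ℝ≥0∞, (∀ᵐ x ∂μ, g x ≤ f x) → ρ g ≤ ρ f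
  fatou : ∀ (F : ℕ → α → ℝ≥0∞) (f : α → ℝ≥0∞),
    (∀ x, Monotone fun k => F k x) → (∀ x, (⨆ k, F k x) = f x) → (⨆ k, ρ (F k)) = ρ f
  nontriv : ∀ A : Set α, MeasurableSet A → μ A < ⊤ → ρ (A.indicator 1) < ⊤
  loc_emb : ∀ A : Set α, MeasurableSet A → μ A < ⊤ →
    ∃ K : ℝ≥0∞, K ≠ ⊤ ∧ ∀ f : α → ℝ≥0∞, ∫⁻ x in A, f x ∂μ ≤ K * ρ f
  rearr_inv : ∀ f g : α → ℝ≥0∞, (∀ t, erearr μ f t = erearr μ g t) → ρ f = ρ g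

/-- A rearrangement-invariant Banach function space, given by its norm. -/
structure RINorm {α : Type*} [MeasurableSpace α] (μ : Measure α) where
  ρ : (α → ℝ≥0∞) → ℝ≥0∞
  isRIBFN : IsRIBFN μ ρ

/-- The associate norm `ρ'(g) = sup { ∫ f g dμ : f ∈ M⁺, ρ(f) ≤ 1 }`. -/
def assocNorm {α : Type*} [MeasurableSpace α] (μ : Measure α)
    (ρ : (α → ℝ≥0∞) → ℝ≥0∞) (g : α → ℝ≥0∞) : ℝ≥0∞ :=
  ⨆ f ∈ {f : α → ℝ≥0∞ | Measurable f ∧ ρ f ≤ 1}, ∫⁻ x, f x * g x ∂μ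

/-- Absolute continuity of a real function on an interval `[a, b]`. -/
def ACOn (f : ℝ → ℝ) (a b : ℝ) : Prop :=
  ∀ ε : ℝ, 0 < ε → ∃ δ : ℝ, 0 < δ ∧ ∀ (s : Finset ℕ) (I : ℕ → ℝ × ℝ),
    (∀ i ∈ s, a ≤ (I i).1 ∧ (I i).1 ≤ (I i).2 ∧ (I i).2 ≤ b) →
    (Set.PairwiseDisjoint (s : Set ℕ) fun i => Set.Ioo (I i).1 (I i).2) →
    (∑ i ∈ s, ((I i).2 - (I i).1)) < δ →
    (∑ i ∈ s, |f (I i).2 - f (I i).1|) < ε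

abbrev Euc (n : ℕ) := EuclideanSpace ℝ (Fin n)

/-- The setting of the paper: an open convex cone `S ⊆ ℝⁿ` (`n ≥ 2`) with a nonzero
continuous `α`-homogeneous weight `w` on `cl S` such that `w^{1/α}` is concave in `S`. -/
structure ConeSetting (n : ℕ) where
  S : Set (Euc n)
  w : Euc n → ℝ
  α : ℝ
  dim_ge : 2 ≤ n
  alpha_pos : 0 < α
  ne : S.Nonempty
  isOpen : IsOpen S
  convex : Convex ℝ S
  cone : ∀ x ∈ S, ∀ r : ℝ, 0 < r → r • x ∈ S
  w_cont : ContinuousOn w (closure S)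
  w_nonneg : ∀ x ∈ closure S, 0 ≤ w x
  w_ne : ∃ x ∈ closure S, w x ≠ 0
  w_hom : ∀ x ∈ closure S, ∀ s : ℝ, 0 < s → w (s • x) = s ^ α * w x
  w_concave : ConcaveOn ℝ S fun x => w x ^ α⁻¹

/-- The weighted measure `μ(E) = ∫_E w dx` on the cone. -/
def ConeSetting.μ {n : ℕ} (cs : ConeSetting n) : Measure (Euc n) :=
  (volume.restrict cs.S).withDensity fun x => ENNReal.ofReal (cs.w x)

/-- `D = n + α`. -/
def ConeSetting.D {n : ℕ} (cs : ConeSetting n) : ℝ := n + cs.α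

/-- `g` is the weak partial derivative of `u` in direction `e_i` in the cone `S`. -/
def HasWeakPartial {n : ℕ} (S : Set (Euc n)) (u g : Euc n → ℝ) (i : Fin n) : Prop :=
  ∀ φ : Euc n → ℝ, ContDiff ℝ (⊤ : ℕ∞) φ → HasCompactSupport φ → tsupport φ ⊆ S →
    ∫ x in S, u x * fderiv ℝ φ x (EuclideanSpace.single i (1:ℝ)) = - ∫ x in S, g x * φ x

/-- `d` is a full family of iterated weak derivatives of `u` on `S`,
indexed by lists of coordinate directions. -/
def HasWeakDerivFamily {n : ℕ} (S : Set (Euc n)) (u : Euc n → ℝ)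
    (d : List (Fin n) → Euc n → ℝ) : Prop :=
  d [] = u ∧ ∀ (L : List (Fin n)) (i : Fin n), HasWeakPartial S (d L) (d (i :: L)) i

/-- `|∇^k u|(x)`: the Euclidean length of the vector of all `k`-th order weak derivatives. -/
def gradNorm {n : ℕ} (d : List (Fin n) → Euc n → ℝ) (k : ℕ) (x : Euc n) : ℝ :=
  Real.sqrt (∑ idx : Fin k → Fin n, (d (List.ofFn idx) x) ^ 2)

/-- Membership in the Sobolev-type space `V^m_0` built upon a function norm `rhoS` on the cone:
`|∇^m u| ∈ X` and all lower-order derivatives have finite-measure level sets. -/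
def MemV0 {n : ℕ} (cs : ConeSetting n) (rhoS : (Euc n → ℝ≥0∞) → ℝ≥0∞) (m : ℕ)
    (u : Euc n → ℝ) (d : List (Fin n) → Euc n → ℝ) : Prop :=
  HasWeakDerivFamily cs.S u d ∧ (∀ L, Measurable (d L)) ∧
  rhoS (fun x => ENNReal.ofReal (gradNorm d m x)) ≠ ⊤ ∧
  ∀ l : ℕ, l < m → ∀ lam : ℝ, 0 < lam → cs.μ {x | lam < |gradNorm d l x|} < ⊤

/-- The norm on `(Σ, μ)` induced by a r.i. norm over `(0, ∞)` via the representation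
`‖v‖_{X(Σ,μ)} = ‖v*_μ‖_{X(0,∞)}`. -/
def repNorm {n : ℕ} (X : RINorm mIoi) (μ' : Measure (Euc n)) (v : Euc n → ℝ≥0∞) : ℝ≥0∞ :=
  X.ρ (rstar μ' v)

/-- The `m`-th order Sobolev inequality `‖u‖_Y ≤ C ‖∇^m u‖_X` on `V^m_0 X(Σ, μ)`. -/
def SobolevIneq {n : ℕ} (cs : ConeSetting n) (X Y : RINorm mIoi) (m : ℕ) (C : ℝ) : Prop :=
  ∀ (u : Euc n → ℝ) (d : List (Fin n) → Euc n → ℝ),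
    MemV0 cs (repNorm X cs.μ) m u d →
    repNorm Y cs.μ (fun x => ENNReal.ofReal |u x|) ≤
      ENNReal.ofReal C * repNorm X cs.μ (fun x => ENNReal.ofReal (gradNorm d m x))

/-- The Lorentz–Karamata functional `‖ t^{1/p − 1/q} b(t) g(t) ‖_{L^q(0,∞)}`,
applied to a function `g` on `(0, ∞)` (typically `g = f*_μ`). -/
def lkQ (p q : ℝ≥0∞) (b : ℝ → ℝ) (g : ℝ → ℝ≥0∞) : ℝ≥0∞ :=
  let e : ℝ := if p = ⊤ then 0 else (p.toReal)⁻¹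
  if q = ⊤ then essSup (fun t => ENNReal.ofReal (t ^ e * b t) * g t) mIoi
  else (∫⁻ t in Set.Ioi (0:ℝ),
      (ENNReal.ofReal (t ^ (e - (q.toReal)⁻¹) * b t) * g t) ^ q.toReal) ^ (q.toReal)⁻¹

/-- The Lorentz–Karamata norm of a function on `(0, ∞)`. -/
def lkRep (p q : ℝ≥0∞) (b : ℝ → ℝ) (f : ℝ → ℝ≥0∞) : ℝ≥0∞ :=
  lkQ p q b (rstar mIoi f)

/-- The Lorentz–Karamata norm of a function on the weighted cone `(Σ, μ)`. -/
def lkCone {n : ℕ} (cs : ConeSetting n) (p q : ℝ≥0∞) (b : ℝ → ℝ) (u : Euc n → ℝ≥0∞) : ℝ≥0∞ :=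
  lkQ p q b (rstar cs.μ u)

/-- Two positive functions are equivalent on a set `s` (two-sided comparison by constants). -/
def EquivOn (f g : ℝ → ℝ) (s : Set ℝ) : Prop :=
  ∃ C₁ C₂ : ℝ, 0 < C₁ ∧ 0 < C₂ ∧ ∀ t ∈ s, C₂ * g t ≤ f t ∧ f t ≤ C₁ * g t

/-- A slowly varying function on `(0, ∞)`. -/
def SlowlyVarying (b : ℝ → ℝ) : Prop :=
  (∀ t ∈ Set.Ioi (0:ℝ), 0 < b t) ∧
  (∀ a c : ℝ, 0 < a → a ≤ c → ACOn b a c) ∧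
  ∀ ε : ℝ, 0 < ε →
    (∃ φ : ℝ → ℝ, MonotoneOn φ (Set.Ioi 0) ∧ EquivOn (fun t => t ^ ε * b t) φ (Set.Ioi 0)) ∧
    (∃ ψ : ℝ → ℝ, AntitoneOn ψ (Set.Ioi 0) ∧ EquivOn (fun t => t ^ (-ε) * b t) ψ (Set.Ioi 0))

namespace Aux5
open Metric

lemma pow_sub_pow_abs_le {a b B : ℝ} (ha : 0 ≤ a) (haB : a ≤ B) (hb : 0 ≤ b) (hbB : b ≤ B)
    (p : ℕ) : |a ^ p - b ^ p| ≤ p * B ^ (p - 1) * |a - b| := by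
  induction p with
  | zero => simp
  | succ p ih =>
    have hB : 0 ≤ B := le_trans ha haB
    have key : a ^ (p + 1) - b ^ (p + 1) = a * (a ^ p - b ^ p) + (a - b) * b ^ p := by ring
    have h1 : |a ^ (p + 1) - b ^ (p + 1)| ≤ a * |a ^ p - b ^ p| + |a - b| * b ^ p := by
      rw [key]
      refine (abs_add_le _ _).trans ?_
      rw [abs_mul, abs_mul, abs_of_nonneg ha, abs_of_nonneg (pow_nonneg hb p)]
    refine h1.trans ?_
    have h2 : a * |a ^ p - b ^ p| ≤ B * (p * B ^ (p - 1) * |a - b|) := by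
      exact mul_le_mul haB ih (abs_nonneg _) hB
    have h3 : |a - b| * b ^ p ≤ B ^ p * |a - b| := by
      rw [mul_comm]
      exact mul_le_mul_of_nonneg_right (pow_le_pow_left₀ hb hbB p) (abs_nonneg _)
    refine (add_le_add h2 h3).trans ?_
    have h4 : B * (↑p * B ^ (p - 1) * |a - b|) ≤ p * B ^ p * |a - b| := by
      rcases Nat.eq_zero_or_pos p with hp | hp
      · subst hp; simp
      · have : B * B ^ (p - 1) = B ^ p := by
          rw [← pow_succ']
          congr 1
          omega
        refine le_of_eq ?_
        calc B * (↑p * B ^ (p - 1) * |a - b|) = ↑p * (B * B ^ (p - 1)) * |a - b| := by ring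
        _ = ↑p * B ^ p * |a - b| := by rw [this]
    calc B * (↑p * B ^ (p-1) * |a-b|) + B ^ p * |a-b| ≤ ↑p * B ^ p * |a-b| + B ^ p * |a-b| :=
          add_le_add h4 le_rfl
    _ = (↑p + 1) * B ^ p * |a - b| := by ring
    _ = (↑(p+1)) * B ^ (p + 1 - 1) * |a - b| := by push_cast; ring_nf


variable {h : ℝ → ℝ} {C R s : ℝ}

lemma integrableOn_Ioi_of_bdd (hmeas : Measurable h)
    (hb : ∀ τ, s < τ → |h τ| ≤ C) (hR : ∀ τ, R < τ → h τ = 0) :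
    IntegrableOn h (Ioi s) := by
  refine Integrable.mono' (g := (Ioc s R).indicator fun _ => C) ?_
    hmeas.aestronglyMeasurable ?_
  · rw [integrable_indicator_iff measurableSet_Ioc]
    refine integrableOn_const (ne_of_lt ?_)
    rw [Measure.restrict_apply measurableSet_Ioc]
    exact lt_of_le_of_lt (measure_mono inter_subset_left) (by simp [Real.volume_Ioc])
  · refine (ae_restrict_iff' measurableSet_Ioi).2 (ae_of_all _ fun τ hτ => ?_)
    by_cases hτR : τ ≤ R
    · rw [indicator_of_mem (show τ ∈ Ioc s R from ⟨hτ, hτR⟩)]; exact hb τ hτ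
    · rw [indicator_of_notMem (fun hmem => hτR hmem.2), hR τ (not_le.1 hτR)]
      simp

lemma H_split {s₁ s₂ : ℝ} (hle : s₁ ≤ s₂) (hint : IntegrableOn h (Ioi s₁)) :
    ∫ τ in Ioi s₁, h τ = (∫ τ in Ioc s₁ s₂, h τ) + ∫ τ in Ioi s₂, h τ := by
  rw [← setIntegral_union Ioc_disjoint_Ioi_same measurableSet_Ioi
      (hint.mono_set Ioc_subset_Ioi_self) (hint.mono_set (Ioi_subset_Ioi hle)),
    Ioc_union_Ioi_eq_Ioi hle]

lemma H_lip_aux (hmeas : Measurable h)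
    (hb : ∀ τ, s < τ → |h τ| ≤ C) (hR : ∀ τ, R < τ → h τ = 0)
    {x y : ℝ} (hx : s < x) (hxy : x ≤ y) :
    |(∫ τ in Ioi y, h τ) - ∫ τ in Ioi x, h τ| ≤ C * |y - x| := by
  have hint : IntegrableOn h (Ioi x) :=
    integrableOn_Ioi_of_bdd hmeas (fun τ ht => hb τ (hx.trans ht)) hR
  rw [H_split hxy hint]
  have h1 : |(∫ τ in Ioi y, h τ) - ((∫ τ in Ioc x y, h τ) + ∫ τ in Ioi y, h τ)|
      = |∫ τ in Ioc x y, h τ| := by rw [abs_sub_comm]; ring_nf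
  rw [h1]
  have h2 : ‖∫ τ in Ioc x y, h τ‖ ≤ C * (volume (Ioc x y)).toReal := by
    refine norm_setIntegral_le_of_norm_le_const ?_ ?_
    · simp only [Real.volume_Ioc]
      exact ENNReal.ofReal_lt_top
    · intro τ hτ
      exact hb τ (hx.trans hτ.1)
  calc |∫ τ in Ioc x y, h τ| ≤ C * (volume (Ioc x y)).toReal := h2
  _ = C * |y - x| := by
      rw [Real.volume_Ioc, ENNReal.toReal_ofReal (by linarith), abs_of_nonneg (by linarith)]

lemma H_aederiv (hmeas : Measurable h)
    (hb : ∀ τ, s < τ → |h τ| ≤ C) (hR : ∀ τ, R < τ → h τ = 0) :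
    ∀ᵐ x ∂(volume.restrict (Ioi s)),
      HasDerivAt (fun y => ∫ τ in Ioi y, h τ) (-(h x)) x := by
  classical
  set h' : ℝ → ℝ := (Ioi s).indicator h with hh'
  have h'meas : Measurable h' := hmeas.indicator measurableSet_Ioi
  have h'int : Integrable h' := by
    refine Integrable.mono' (g := (Ioc s R).indicator fun _ => C) ?_
      h'meas.aestronglyMeasurable (ae_of_all _ fun τ => ?_)
    · rw [integrable_indicator_iff measurableSet_Ioc]
      exact integrableOn_const (ne_of_lt (by simp [Real.volume_Ioc]))
    · by_cases hτ : τ ∈ Ioi s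
      · rw [hh', indicator_of_mem hτ]
        by_cases hτR : τ ≤ R
        · rw [indicator_of_mem (show τ ∈ Ioc s R from ⟨hτ, hτR⟩)]; exact hb τ hτ
        · rw [indicator_of_notMem (fun hmem => hτR hmem.2), hR τ (not_le.1 hτR)]
          simp
      · rw [hh', indicator_of_notMem hτ, indicator_of_notMem (fun hmem => hτ hmem.1)]
        simp
  have lebesgue := IsUnifLocDoublingMeasure.ae_tendsto_average_norm_sub
    (μ := (volume : Measure ℝ)) h'int.locallyIntegrable 1
  filter_upwards [ae_restrict_mem measurableSet_Ioi, ae_restrict_of_ae lebesgue] with x hxs hx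
  have hxA : Tendsto (fun r : ℝ => ⨍ τ in closedBall x r, ‖h' τ - h' x‖) (𝓝[>] 0) (𝓝 0) := by
    refine hx (fun _ => x) (fun r => r) tendsto_id ?_
    filter_upwards [self_mem_nhdsWithin] with r hr
    exact mem_closedBall_self (by simpa using le_of_lt hr)
  have key : ∀ y : ℝ, s < y →
      |(∫ τ in Ioi y, h τ) - (∫ τ in Ioi x, h τ) + h x * (y - x)|
        ≤ ∫ τ in closedBall x |y - x|, ‖h' τ - h' x‖ := by
    intro y hy
    have hsub : ∀ a b : ℝ, s < a → a ≤ b → Ioc a b ⊆ closedBall x |y - x| →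
        |(∫ τ in Ioc a b, h τ) - h x * (b - a)|
          ≤ ∫ τ in closedBall x |y - x|, ‖h' τ - h' x‖ := by
      intro a b ha hab hsubset
      have hint : IntegrableOn h (Ioc a b) :=
        (integrableOn_Ioi_of_bdd hmeas (fun τ ht => hb τ (ha.trans ht)) hR).mono_set
          Ioc_subset_Ioi_self
      have hconst : ∫ τ in Ioc a b, h x = h x * (b - a) := by
        rw [setIntegral_const, Real.volume_real_Ioc_of_le (by linarith),
          smul_eq_mul]
        ring
      have hsubint : ∫ τ in Ioc a b, (h τ - h x)
          = (∫ τ in Ioc a b, h τ) - ∫ τ in Ioc a b, h x :=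
        integral_sub hint (integrableOn_const (ne_of_lt (by
          rw [Real.volume_Ioc]; exact ENNReal.ofReal_lt_top)))
      have heq : (∫ τ in Ioc a b, h τ) - h x * (b - a) = ∫ τ in Ioc a b, (h τ - h x) := by
        rw [hsubint, hconst]
      rw [heq]
      have hnorm : |∫ τ in Ioc a b, (h τ - h x)| ≤ ∫ τ in Ioc a b, ‖h' τ - h' x‖ := by
        rw [← Real.norm_eq_abs]
        refine (norm_integral_le_integral_norm _).trans (le_of_eq ?_)
        refine setIntegral_congr_fun measurableSet_Ioc fun τ hτ => ?_
        rw [Real.norm_eq_abs, Real.norm_eq_abs, hh',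
          indicator_of_mem (show τ ∈ Ioi s from ha.trans hτ.1),
          indicator_of_mem (show x ∈ Ioi s from hxs)]
      refine hnorm.trans ?_
      refine setIntegral_mono_set ?_
        (ae_of_all _ fun τ => norm_nonneg _) (HasSubset.Subset.eventuallyLE hsubset)
      exact (h'int.integrableOn.sub (integrableOn_const (ne_of_lt (by
        rw [Real.volume_closedBall]; exact ENNReal.ofReal_lt_top)))).norm
    rcases le_or_gt x y with hxy | hxy
    · have hIx : IntegrableOn h (Ioi x) :=
        integrableOn_Ioi_of_bdd hmeas (fun τ ht => hb τ (hxs.trans ht)) hR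
      have hspl := H_split hxy hIx
      have h1 : (∫ τ in Ioi y, h τ) - (∫ τ in Ioi x, h τ) + h x * (y - x)
          = -((∫ τ in Ioc x y, h τ) - h x * (y - x)) := by rw [hspl]; ring
      rw [h1, abs_neg]
      refine hsub x y hxs hxy fun τ hτ => ?_
      rw [Real.closedBall_eq_Icc, abs_of_nonneg (show (0:ℝ) ≤ y - x by linarith)]
      exact ⟨by linarith [hτ.1], by linarith [hτ.2]⟩
    · have hIy : IntegrableOn h (Ioi y) :=
        integrableOn_Ioi_of_bdd hmeas (fun τ ht => hb τ (hy.trans ht)) hR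
      have hspl := H_split (le_of_lt hxy) hIy
      have h1 : (∫ τ in Ioi y, h τ) - (∫ τ in Ioi x, h τ) + h x * (y - x)
          = (∫ τ in Ioc y x, h τ) - h x * (x - y) := by rw [hspl]; ring
      rw [h1]
      refine hsub y x hy (le_of_lt hxy) fun τ hτ => ?_
      rw [Real.closedBall_eq_Icc, abs_of_nonpos (show y - x ≤ 0 by linarith)]
      exact ⟨by linarith [hτ.1], by linarith [hτ.2]⟩
  rw [hasDerivAt_iff_tendsto_slope, ← tendsto_sub_nhds_zero_iff]
  have hcomp : Tendsto (fun y : ℝ => |y - x|) (𝓝[≠] x) (𝓝[>] 0) := by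
    rw [tendsto_nhdsWithin_iff]
    constructor
    · have h0 : Tendsto (fun y : ℝ => y - x) (𝓝 x) (𝓝 (x - x)) :=
        (continuous_id.sub continuous_const).tendsto x
      rw [sub_self] at h0
      simpa using (h0.abs).mono_left (nhdsWithin_le_nhds : 𝓝[≠] x ≤ 𝓝 x)
    · filter_upwards [self_mem_nhdsWithin] with y hy
      exact abs_pos.2 (sub_ne_zero.2 hy)
  have hA2 : Tendsto (fun y : ℝ => 2 * ⨍ τ in closedBall x |y - x|, ‖h' τ - h' x‖)
      (𝓝[≠] x) (𝓝 0) := by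
    have := (hxA.comp hcomp).const_mul (2:ℝ)
    simpa using this
  refine squeeze_zero_norm' ?_ hA2
  have hmem : ∀ᶠ y in 𝓝 x, |y - x| < x - s := by
    filter_upwards [Metric.ball_mem_nhds x (sub_pos.2 hxs)] with y hy
    rw [mem_ball, Real.dist_eq] at hy; exact hy
  filter_upwards [nhdsWithin_le_nhds hmem, self_mem_nhdsWithin] with y hyb hyne
  have hyne' : y ≠ x := hyne
  have hys : s < y := by
    have := (abs_lt.1 hyb).1; linarith
  have hr : (0:ℝ) < |y - x| := abs_pos.2 (sub_ne_zero.2 hyne')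
  have hkey := key y hys
  have hslope : slope (fun y => ∫ τ in Ioi y, h τ) x y - (-(h x))
      = ((∫ τ in Ioi y, h τ) - (∫ τ in Ioi x, h τ) + h x * (y - x)) / (y - x) := by
    rw [slope_def_field]
    field_simp [sub_ne_zero.2 hyne']
    ring
  rw [hslope, Real.norm_eq_abs, abs_div]
  have hvol : (volume (closedBall x |y - x|)).toReal = 2 * |y - x| := by
    rw [Real.volume_closedBall, ENNReal.toReal_ofReal (by positivity)]
  have hrhs : 2 * ⨍ τ in closedBall x |y - x|, ‖h' τ - h' x‖
      = (∫ τ in closedBall x |y - x|, ‖h' τ - h' x‖) / |y - x| := by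
    rw [setAverage_eq, measureReal_def, hvol, smul_eq_mul]
    field_simp
  rw [hrhs]
  gcongr


lemma G_hasDerivAt (hmeas : Measurable h) {C R s t : ℝ}
    (hb : ∀ τ, s < τ → |h τ| ≤ C) (hR : ∀ τ, R < τ → h τ = 0)
    (hst : s < t) {p : ℕ} (hp : 1 ≤ p) :
    HasDerivAt (fun x => ∫ τ in Ioi x, h τ * (τ - x) ^ p)
      (-(p:ℝ) * ∫ τ in Ioi t, h τ * (τ - t) ^ (p - 1)) t := by
  classical
  have hC0 : 0 ≤ C := (abs_nonneg _).trans (hb t hst)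
  set B : ℝ := max (R - s) 0 with hB
  have hB0 : 0 ≤ B := le_max_right _ _
  set F : ℝ → ℝ → ℝ := fun x τ => h τ * (max (τ - x) 0) ^ p with hF
  set F' : ℝ → ℝ := fun τ => if t < τ then -(p:ℝ) * (h τ * (τ - t) ^ (p - 1)) else 0 with hF'
  set bound : ℝ → ℝ := (Ioc s R).indicator fun _ => C * ((p:ℝ) * B ^ (p - 1)) with hbound
  have hFx_meas : ∀ x : ℝ, AEStronglyMeasurable (F x) (volume.restrict (Ioi s)) := by
    intro x
    exact (hmeas.mul (((continuous_id.sub continuous_const).max continuous_const).pow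
      p).measurable).aestronglyMeasurable
  have hμIoc : (volume : Measure ℝ) (Ioc s R) < ⊤ := by
    rw [Real.volume_Ioc]; exact ENNReal.ofReal_lt_top
  have hF_int : Integrable (F t) (volume.restrict (Ioi s)) := by
    refine Integrable.mono' (g := (Ioc s R).indicator fun _ => C * B ^ p) ?_ (hFx_meas t) ?_
    · rw [integrable_indicator_iff measurableSet_Ioc]
      refine integrableOn_const (ne_of_lt ?_)
      rw [Measure.restrict_apply measurableSet_Ioc]
      exact lt_of_le_of_lt (measure_mono inter_subset_left) hμIoc
    · refine (ae_restrict_iff' measurableSet_Ioi).2 (ae_of_all _ fun τ hτ => ?_)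
      by_cases hτR : τ ≤ R
      · rw [indicator_of_mem (show τ ∈ Ioc s R from ⟨hτ, hτR⟩)]
        have hmax0 : (0:ℝ) ≤ max (τ - t) 0 := le_max_right _ _
        have hmaxB : max (τ - t) 0 ≤ B := max_le_max (by simp only [mem_Ioi] at hτ; linarith) le_rfl
        rw [Real.norm_eq_abs, hF, abs_mul, abs_pow, abs_of_nonneg hmax0]
        exact mul_le_mul (hb τ hτ) (pow_le_pow_left₀ hmax0 hmaxB p) (by positivity) hC0
      · rw [indicator_of_notMem (fun hmem => hτR hmem.2)]
        have h0 : h τ = 0 := hR τ (not_le.1 hτR)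
        simp [hF, h0]
  have hF'_meas : AEStronglyMeasurable F' (volume.restrict (Ioi s)) := by
    refine (Measurable.ite (measurableSet_Ioi (a := t)) ?_ measurable_const).aestronglyMeasurable
    exact measurable_const.mul (hmeas.mul ((continuous_id.sub continuous_const).pow
      (p - 1)).measurable)
  have h_lip : ∀ᵐ τ ∂(volume.restrict (Ioi s)),
      LipschitzOnWith (Real.nnabs (bound τ)) (F · τ) (ball t (t - s)) := by
    refine (ae_restrict_iff' measurableSet_Ioi).2 (ae_of_all _ fun τ hτ => ?_)
    refine LipschitzOnWith.of_dist_le_mul fun x hx y hy => ?_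
    have hxs : s < x := by rw [mem_ball, Real.dist_eq] at hx; have := (abs_lt.1 hx).1; linarith
    have hys : s < y := by rw [mem_ball, Real.dist_eq] at hy; have := (abs_lt.1 hy).1; linarith
    by_cases hτR : τ ≤ R
    · have hbm : bound τ = C * ((p:ℝ) * B ^ (p - 1)) :=
        indicator_of_mem (show τ ∈ Ioc s R from ⟨hτ, hτR⟩) _
      set a := max (τ - x) 0
      set b' := max (τ - y) 0
      have ha0 : 0 ≤ a := le_max_right _ _
      have hb0' : 0 ≤ b' := le_max_right _ _
      have haB : a ≤ B := max_le_max (by linarith) le_rfl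
      have hbB' : b' ≤ B := max_le_max (by linarith) le_rfl
      have hdist : dist (F x τ) (F y τ) = |h τ| * |a ^ p - b' ^ p| := by
        rw [Real.dist_eq, hF]
        rw [← mul_sub, abs_mul]
      have habs : |a - b'| ≤ dist x y := by
        have := abs_max_sub_max_le_abs (τ - x) (τ - y) 0
        rw [Real.dist_eq]
        calc |a - b'| ≤ |(τ - x) - (τ - y)| := this
        _ = |y - x| := by ring_nf
        _ = |x - y| := abs_sub_comm _ _
      calc dist (F x τ) (F y τ) = |h τ| * |a ^ p - b' ^ p| := hdist
      _ ≤ C * ((p:ℝ) * B ^ (p - 1) * |a - b'|) := by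
          refine mul_le_mul (hb τ hτ) (pow_sub_pow_abs_le ha0 haB hb0' hbB' p)
            (abs_nonneg _) hC0
      _ ≤ C * ((p:ℝ) * B ^ (p - 1) * dist x y) := by
          refine mul_le_mul_of_nonneg_left ?_ hC0
          exact mul_le_mul_of_nonneg_left habs (by positivity)
      _ = (Real.nnabs (bound τ) : ℝ) * dist x y := by
          rw [hbm, Real.coe_nnabs, abs_of_nonneg (by positivity)]
          ring
    · have h0 : h τ = 0 := hR τ (not_le.1 hτR)
      have hFz : ∀ z : ℝ, F z τ = 0 := fun z => by rw [hF]; simp [h0]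
      rw [hFz x, hFz y, dist_self]
      positivity
  have hbound_int : Integrable bound (volume.restrict (Ioi s)) := by
    rw [hbound, integrable_indicator_iff measurableSet_Ioc]
    refine integrableOn_const (ne_of_lt ?_)
    rw [Measure.restrict_apply measurableSet_Ioc]
    exact lt_of_le_of_lt (measure_mono inter_subset_left) hμIoc
  have h_diff : ∀ᵐ τ ∂(volume.restrict (Ioi s)), HasDerivAt (F · τ) (F' τ) t := by
    have hne : ∀ᵐ τ ∂(volume.restrict (Ioi s)), τ ≠ t := by
      refine ae_restrict_of_ae ?_
      rw [ae_iff]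
      have : {τ : ℝ | ¬τ ≠ t} = {t} := by ext τ; simp
      rw [this]
      exact Real.volume_singleton
    filter_upwards [hne] with τ hτt
    rcases lt_or_gt_of_ne hτt with hlt | hgt
    · -- τ < t : F x τ = 0 near t
      have : F' τ = 0 := if_neg (by linarith)
      rw [this]
      refine (hasDerivAt_const t (0:ℝ)).congr_of_eventuallyEq ?_
      filter_upwards [Ioi_mem_nhds hlt] with x hx
      rw [hF]
      simp only
      rw [max_eq_right (by simp only [mem_Ioi] at hx; linarith), zero_pow (by omega), mul_zero]
    · -- t < τ
      have hF'v : F' τ = -(p:ℝ) * (h τ * (τ - t) ^ (p - 1)) := if_pos hgt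
      rw [hF'v]
      have hd : HasDerivAt (fun x : ℝ => τ - x) (-1) t := by
        simpa using (hasDerivAt_id t).const_sub τ
      have hd2 : HasDerivAt (fun x : ℝ => (τ - x) ^ p)
          ((p:ℝ) * (τ - t) ^ (p - 1) * (-1)) t := hd.pow p
      have hd3 : HasDerivAt (fun x : ℝ => h τ * (τ - x) ^ p)
          (h τ * ((p:ℝ) * (τ - t) ^ (p - 1) * (-1))) t := hd2.const_mul _
      have heq : (F · τ) =ᶠ[𝓝 t] fun x : ℝ => h τ * (τ - x) ^ p := by
        filter_upwards [Iio_mem_nhds hgt] with x hx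
        rw [hF]
        simp only
        rw [max_eq_left (by simp only [mem_Iio] at hx; linarith)]
      refine (HasDerivAt.congr_of_eventuallyEq hd3 heq).congr_deriv ?_
      ring
  have key := (hasDerivAt_integral_of_dominated_loc_of_lip
    (F := F) (F' := F') (bound := bound) (μ := volume.restrict (Ioi s))
    (ball_mem_nhds t (show (0:ℝ) < t - s by linarith))
    (Eventually.of_forall hFx_meas) hF_int hF'_meas h_lip hbound_int h_diff).2
  have hF'eq : (∫ τ in Ioi s, F' τ) = -(p:ℝ) * ∫ τ in Ioi t, h τ * (τ - t) ^ (p - 1) := by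
    have hptw : ∀ τ ∈ Ioi s,
        F' τ = (Ioi t).indicator (fun τ => -(p:ℝ) * (h τ * (τ - t) ^ (p - 1))) τ := by
      intro τ _
      by_cases hlt : t < τ
      · rw [indicator_of_mem (show τ ∈ Ioi t from hlt)]
        show (if t < τ then -(p:ℝ) * (h τ * (τ - t) ^ (p - 1)) else 0) = _
        rw [if_pos hlt]
      · rw [indicator_of_notMem (show τ ∉ Ioi t from hlt)]
        show (if t < τ then -(p:ℝ) * (h τ * (τ - t) ^ (p - 1)) else 0) = _
        rw [if_neg hlt]
    rw [setIntegral_congr_fun measurableSet_Ioi hptw, setIntegral_indicator measurableSet_Ioi,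
      Set.Ioi_inter_Ioi, sup_of_le_right hst.le, integral_const_mul]
  have hFeq : (fun x => ∫ τ in Ioi s, F x τ) =ᶠ[𝓝 t]
      fun x => ∫ τ in Ioi x, h τ * (τ - x) ^ p := by
    filter_upwards [Ioi_mem_nhds hst] with x hx
    have hptw : ∀ τ ∈ Ioi s,
        F x τ = (Ioi x).indicator (fun τ => h τ * (τ - x) ^ p) τ := by
      intro τ _
      by_cases hlt : x < τ
      · rw [hF, indicator_of_mem (show τ ∈ Ioi x from hlt)]
        simp only
        rw [max_eq_left (by linarith)]
      · rw [hF, indicator_of_notMem (show τ ∉ Ioi x from hlt)]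
        simp only
        push_neg at hlt
        rw [max_eq_right (by linarith), zero_pow (by omega), mul_zero]
    rw [setIntegral_congr_fun measurableSet_Ioi hptw, setIntegral_indicator measurableSet_Ioi,
      Set.Ioi_inter_Ioi, sup_of_le_right (le_of_lt hx)]
  rw [← hF'eq]
  exact key.congr_of_eventuallyEq hFeq.symm


end Aux5

open Metric

/-- (Lemma on the auxiliary function `g`.) Let `1 ≤ m < D`, and let
`f ∈ M⁺(0,∞) ∩ L^∞(0,∞)` have bounded support. For
`g(t) = ∫_t^∞ f(τ) τ^{m/D − m} (τ − t)^{m−1} dτ` one has `g ∈ C^{m−1}(0, ∞)` with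
`g^{(j)}(t) = (−1)^j ((m−1)!/(m−j−1)!) ∫_t^∞ f(τ) τ^{m/D − m} (τ − t)^{m−j−1} dτ`
for `1 ≤ j ≤ m−1`; moreover `g^{(m−1)}` is locally Lipschitz on `(0, ∞)` and
`g^{(m)}(t) = (−1)^m (m−1)! f(t) t^{m/D − m}` for a.e. `t ∈ (0, ∞)`. -/
theorem aux_function_derivatives (m : ℕ) (D : ℝ) (hm : 1 ≤ m) (hmD : (m : ℝ) < D)
    (f : ℝ → ℝ) (hf : Measurable f) (hf0 : ∀ t, 0 ≤ f t) (M : ℝ) (hfM : ∀ t, f t ≤ M)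
    (R : ℝ) (hfR : ∀ t, R < t → f t = 0)
    (g : ℝ → ℝ)
    (hg : ∀ t : ℝ, g t = ∫ τ in Set.Ioi t, f τ * τ ^ ((m : ℝ) / D - m) * (τ - t) ^ (m - 1)) :
    ContDiffOn ℝ ((m - 1 : ℕ) : ℕ∞) g (Set.Ioi 0) ∧
    (∀ j : ℕ, 1 ≤ j → j ≤ m - 1 → ∀ t : ℝ, 0 < t →
      iteratedDeriv j g t = (-1) ^ j *
        ((Nat.factorial (m - 1) : ℝ) / (Nat.factorial (m - j - 1) : ℝ)) *
        ∫ τ in Set.Ioi t, f τ * τ ^ ((m : ℝ) / D - m) * (τ - t) ^ (m - j - 1)) ∧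
    (∀ t : ℝ, 0 < t → ∃ ε : ℝ, 0 < ε ∧ ∃ K : ℝ≥0,
      LipschitzOnWith K (iteratedDeriv (m - 1) g) (Metric.ball t ε ∩ Set.Ioi 0)) ∧
    (∀ᵐ t ∂mIoi, HasDerivAt (iteratedDeriv (m - 1) g)
      ((-1) ^ m * (Nat.factorial (m - 1) : ℝ) * f t * t ^ ((m : ℝ) / D - m)) t) := by
  classical
  have hm' : (1:ℝ) ≤ m := by exact_mod_cast hm
  have hD1 : (1:ℝ) ≤ D := le_trans hm' hmD.le
  have hM0 : (0:ℝ) ≤ M := le_trans (hf0 0) (hfM 0)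
  set E : ℝ := (m:ℝ)/D - m with hE
  have hE0 : E ≤ 0 := by
    have : (m:ℝ)/D ≤ m := div_le_self (by positivity) hD1
    rw [hE]; linarith
  have hmeas : Measurable (fun τ : ℝ => f τ * τ ^ E) :=
    hf.mul (measurable_id.pow measurable_const)
  have hbound : ∀ s : ℝ, 0 < s → ∀ τ : ℝ, s < τ → |f τ * τ ^ E| ≤ M * s ^ E := by
    intro s hs τ hτ
    have hτ0 : 0 < τ := hs.trans hτ
    have h1 : 0 ≤ τ ^ E := Real.rpow_nonneg hτ0.le _
    rw [abs_of_nonneg (mul_nonneg (hf0 τ) h1)]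
    exact mul_le_mul (hfM τ) (Real.rpow_le_rpow_of_nonpos hs (le_of_lt hτ) hE0) h1 hM0
  have hCpos : ∀ s : ℝ, 0 < s → 0 ≤ M * s ^ E :=
    fun s hs => mul_nonneg hM0 (Real.rpow_nonneg hs.le _)
  have hR'0 : ∀ τ : ℝ, max R 0 < τ → f τ * τ ^ E = 0 := fun τ hτ => by
    rw [hfR τ (lt_of_le_of_lt (le_max_left R 0) hτ), zero_mul]
  -- Claim A
  have claimA : ∀ p : ℕ, 1 ≤ p → ∀ t : ℝ, 0 < t →
      HasDerivAt (fun x => ∫ τ in Ioi x, f τ * τ ^ E * (τ - x) ^ p)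
        (-(p:ℝ) * ∫ τ in Ioi t, f τ * τ ^ E * (τ - t) ^ (p - 1)) t := by
    intro p hp t ht
    exact Aux5.G_hasDerivAt (h := fun τ => f τ * τ ^ E) hmeas
      (hbound (t/2) (by linarith)) hR'0 (show t/2 < t by linarith) hp
  -- Claim B
  have claimB : ∀ t : ℝ, 0 < t → ∀ x y : ℝ, t/2 < x → t/2 < y →
      |(∫ τ in Ioi y, f τ * τ ^ E) - ∫ τ in Ioi x, f τ * τ ^ E|
        ≤ (M * (t/2) ^ E) * |y - x| := by
    intro t ht x y hx hy
    rcases le_total x y with hxy | hxy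
    · exact Aux5.H_lip_aux (h := fun τ => f τ * τ ^ E) hmeas
        (hbound (t/2) (by linarith)) hR'0 hx hxy
    · rw [abs_sub_comm, abs_sub_comm y x]
      exact Aux5.H_lip_aux (h := fun τ => f τ * τ ^ E) hmeas
        (hbound (t/2) (by linarith)) hR'0 hy hxy
  -- Claim C
  have claimC : ∀ s : ℝ, 0 < s → ∀ᵐ x ∂(volume.restrict (Ioi s)),
      HasDerivAt (fun y => ∫ τ in Ioi y, f τ * τ ^ E) (-(f x * x ^ E)) x :=
    fun s hs => Aux5.H_aederiv (h := fun τ => f τ * τ ^ E) hmeas (hbound s hs) hR'0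
  have hG0 : ∀ t : ℝ, (∫ τ in Ioi t, f τ * τ ^ E * (τ - t) ^ (0:ℕ))
      = ∫ τ in Ioi t, f τ * τ ^ E := by
    intro t
    refine setIntegral_congr_fun measurableSet_Ioi fun τ _ => ?_
    rw [pow_zero, mul_one]
  have hfacne : ∀ k : ℕ, ((Nat.factorial k : ℝ)) ≠ 0 :=
    fun k => Nat.cast_ne_zero.mpr (Nat.factorial_pos k).ne'
  -- the master formula
  have hP : ∀ j : ℕ, j ≤ m - 1 → ∀ t : ℝ, 0 < t →
      iteratedDeriv j g t = (-1)^j *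
        ((Nat.factorial (m-1) : ℝ) / (Nat.factorial (m-1-j) : ℝ)) *
        ∫ τ in Ioi t, f τ * τ ^ E * (τ - t) ^ (m - 1 - j) := by
    intro j
    induction j with
    | zero =>
      intro _ t ht
      rw [iteratedDeriv_zero, hg t, Nat.sub_zero, pow_zero, one_mul,
        div_self (hfacne (m-1)), one_mul]
    | succ j ih =>
      intro hj t ht
      have hj' : j ≤ m - 1 := by omega
      obtain ⟨k, hk2⟩ : ∃ k, m - 1 - j = k + 1 := ⟨m - 1 - (j+1), by omega⟩
      have hk1 : 1 ≤ m - 1 - j := by omega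
      rw [iteratedDeriv_succ]
      have heq : iteratedDeriv j g =ᶠ[𝓝 t] fun x =>
          ((-1:ℝ)^j * ((Nat.factorial (m-1) : ℝ) / (Nat.factorial (m-1-j) : ℝ))) *
          ∫ τ in Ioi x, f τ * τ ^ E * (τ - x) ^ (m-1-j) := by
        filter_upwards [Ioi_mem_nhds ht] with x hx
        rw [ih hj' x hx]
      rw [heq.deriv_eq]
      have hd := (claimA (m-1-j) hk1 t ht).const_mul
        ((-1:ℝ)^j * ((Nat.factorial (m-1) : ℝ) / (Nat.factorial (m-1-j) : ℝ)))
      rw [hd.deriv, hk2]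
      have hidx : m - 1 - (j + 1) = k := by omega
      rw [hidx, Nat.add_sub_cancel, Nat.factorial_succ]
      push_cast
      have h2 : ((Nat.factorial k : ℝ)) ≠ 0 := hfacne k
      field_simp
      ring
  -- continuity of H
  have hHcont : ContinuousOn (fun x => ∫ τ in Ioi x, f τ * τ ^ E) (Ioi 0) := by
    intro t ht
    have ht0 : (0:ℝ) < t := ht
    have hlip : LipschitzOnWith (Real.toNNReal (M * (t/2) ^ E))
        (fun x => ∫ τ in Ioi x, f τ * τ ^ E) (ball t (t/2)) := by
      refine LipschitzOnWith.of_dist_le_mul fun x hx y hy => ?_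
      have hx2 : t/2 < x := by
        rw [mem_ball, Real.dist_eq] at hx; have := (abs_lt.1 hx).1; linarith
      have hy2 : t/2 < y := by
        rw [mem_ball, Real.dist_eq] at hy; have := (abs_lt.1 hy).1; linarith
      rw [Real.dist_eq, Real.dist_eq, Real.coe_toNNReal _ (hCpos (t/2) (by linarith))]
      exact claimB t ht0 y x hy2 hx2
    exact ((hlip.continuousOn).continuousAt
      (ball_mem_nhds t (by linarith))).continuousWithinAt
  -- differentiability of intermediate iterated derivatives
  have hHD : ∀ k : ℕ, k < m - 1 → ∀ x : ℝ, 0 < x →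
      DifferentiableAt ℝ (iteratedDeriv k g) x := by
    intro k hk x hx
    have hp1 : 1 ≤ m - 1 - k := by omega
    have heq : iteratedDeriv k g =ᶠ[𝓝 x] fun s =>
        ((-1:ℝ)^k * ((Nat.factorial (m-1) : ℝ) / (Nat.factorial (m-1-k) : ℝ))) *
        ∫ τ in Ioi s, f τ * τ ^ E * (τ - s) ^ (m-1-k) := by
      filter_upwards [Ioi_mem_nhds hx] with y hy
      rw [hP k hk.le y hy]
    have hd := ((claimA (m-1-k) hp1 x hx).const_mul
      ((-1:ℝ)^k * ((Nat.factorial (m-1) : ℝ) / (Nat.factorial (m-1-k) : ℝ)))).congr_of_eventuallyEq heq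
    exact hd.differentiableAt
  -- ContDiffOn by induction
  have hQ : ∀ i : ℕ, i ≤ m - 1 → ContDiffOn ℝ i (iteratedDeriv (m - 1 - i) g) (Ioi 0) := by
    intro i
    induction i with
    | zero =>
      intro _
      rw [Nat.cast_zero, contDiffOn_zero, Nat.sub_zero]
      have hc : ContinuousOn (fun x => ((-1:ℝ)^(m-1) *
          ((Nat.factorial (m-1) : ℝ) / (Nat.factorial 0 : ℝ))) *
          ∫ τ in Ioi x, f τ * τ ^ E) (Ioi 0) := continuousOn_const.mul hHcont
      refine hc.congr ?_
      intro x hx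
      have h1 := hP (m-1) le_rfl x hx
      rw [Nat.sub_self] at h1
      simp only
      rw [h1, hG0 x]
    | succ i ih =>
      intro hi
      have hi' : i ≤ m - 1 := by omega
      have hcast : ((i+1 : ℕ) : WithTop ℕ∞) = ((i:ℕ) : WithTop ℕ∞) + 1 := by
        exact_mod_cast rfl
      rw [hcast, contDiffOn_succ_iff_deriv_of_isOpen isOpen_Ioi]
      refine ⟨?_, ?_, ?_⟩
      · intro x hx
        exact (hHD (m-1-(i+1)) (by omega) x hx).differentiableWithinAt
      · intro hω
        exact absurd hω (by simp)
      · have hidx2 : m - 1 - i = (m - 1 - (i+1)) + 1 := by omega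
        have hder : deriv (iteratedDeriv (m - 1 - (i+1)) g) = iteratedDeriv (m - 1 - i) g := by
          rw [hidx2, iteratedDeriv_succ]
        rw [hder]
        exact ih hi'
  refine ⟨?_, ?_, ?_, ?_⟩
  · have h1 := hQ (m-1) le_rfl
    rw [Nat.sub_self, iteratedDeriv_zero] at h1
    exact_mod_cast h1
  · intro j hj1 hj2 t ht
    have h1 := hP j hj2 t ht
    rw [show m - j - 1 = m - 1 - j from by omega]
    exact h1
  · intro t ht
    refine ⟨t/2, by linarith, Real.toNNReal
      (|(-1:ℝ)^(m-1) * ((Nat.factorial (m-1) : ℝ) / (Nat.factorial 0 : ℝ))| * (M * (t/2) ^ E)), ?_⟩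
    refine LipschitzOnWith.of_dist_le_mul fun x hx y hy => ?_
    have hx2 : t/2 < x := by
      have := hx.1; rw [mem_ball, Real.dist_eq] at this
      have := (abs_lt.1 this).1; linarith
    have hy2 : t/2 < y := by
      have := hy.1; rw [mem_ball, Real.dist_eq] at this
      have := (abs_lt.1 this).1; linarith
    have h1 := hP (m-1) le_rfl x hx.2
    have h2 := hP (m-1) le_rfl y hy.2
    rw [Nat.sub_self] at h1 h2
    rw [Real.dist_eq, h1, h2, hG0 x, hG0 y, Real.dist_eq,
      Real.coe_toNNReal _ (mul_nonneg (abs_nonneg _) (hCpos (t/2) (by linarith)))]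
    set c : ℝ := (-1:ℝ)^(m-1) * ((Nat.factorial (m-1) : ℝ) / (Nat.factorial 0 : ℝ))
    calc |c * (∫ τ in Ioi x, f τ * τ ^ E) - c * ∫ τ in Ioi y, f τ * τ ^ E|
        = |c| * |(∫ τ in Ioi x, f τ * τ ^ E) - ∫ τ in Ioi y, f τ * τ ^ E| := by
          rw [← abs_mul, mul_sub]
    _ ≤ |c| * ((M * (t/2) ^ E) * |x - y|) :=
        mul_le_mul_of_nonneg_left (claimB t ht y x hy2 hx2) (abs_nonneg _)
    _ = |c| * (M * (t/2) ^ E) * |x - y| := by ring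
  · have hrw : (mIoi : Measure ℝ) = volume.restrict (Ioi 0) := rfl
    rw [hrw, show Ioi (0:ℝ) = ⋃ n : ℕ, Ioi (1/(n+1) : ℝ) from ?_,
      ae_restrict_iUnion_iff]
    · intro n
      have hs : (0:ℝ) < 1/(n+1) := by positivity
      filter_upwards [claimC _ hs, ae_restrict_mem measurableSet_Ioi] with x hx hxmem
      have hx0 : (0:ℝ) < x := lt_trans hs hxmem
      have heq : iteratedDeriv (m-1) g =ᶠ[𝓝 x] fun s =>
          ((-1:ℝ)^(m-1) * ((Nat.factorial (m-1) : ℝ) / (Nat.factorial 0 : ℝ))) *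
          ∫ τ in Ioi s, f τ * τ ^ E := by
        filter_upwards [Ioi_mem_nhds hx0] with y hy
        have h1 := hP (m-1) le_rfl y hy
        rw [Nat.sub_self] at h1
        rw [h1, hG0 y, mul_assoc]
      have hd := (hx.const_mul
        ((-1:ℝ)^(m-1) * ((Nat.factorial (m-1) : ℝ) / (Nat.factorial 0 : ℝ)))).congr_of_eventuallyEq heq
      refine hd.congr_deriv ?_
      have hsgn : (-1:ℝ)^m = -(-1:ℝ)^(m-1) := by
        conv_lhs => rw [show m = (m-1)+1 from by omega]
        rw [pow_succ]; ring
      rw [hsgn, Nat.factorial_zero]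
      push_cast
      ring
    · ext x
      simp only [mem_Ioi, mem_iUnion]
      constructor
      · intro hx
        obtain ⟨n, hn⟩ := exists_nat_one_div_lt hx
        exact ⟨n, hn⟩
      · rintro ⟨n, hn⟩
        exact lt_trans (by positivity) hn
end
end

section
/- Let Y be a rearrangement-invariant Banach function space over (0, ∞), X a rearrangement-invariant Banach function space over (0, ∞), and 0 < m < D. If there is a constant C such that ‖∫_t^∞ f(τ) τ^{m/D − 1} dτ‖_{Y} ≤ C ‖f‖_{X} for all nonnegative measurable f on (0, ∞), then the function t ↦ t^{m/D − 1} χ_{(1, ∞)}(t) belongs to the associate space X'(0, ∞). -/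
open MeasureTheory Set Filter Topology ENNReal NNReal

noncomputable section

/-- If `‖∫_t^∞ f(τ) τ^{m/D−1} dτ‖_Y ≤ C ‖f‖_X` for all nonnegative measurable
`f` on `(0,∞)`, then `t ↦ t^{m/D−1} χ_{(1,∞)}(t)` belongs to the associate space `X'(0,∞)`. -/
theorem necessary_condition_assoc (X Y : RINorm mIoi) (m D : ℝ) (hm : 0 < m) (hmD : m < D)
    (C : ℝ)
    (h : ∀ f : ℝ → ℝ≥0∞, Measurable f →
      Y.ρ (fun t => ∫⁻ τ in Set.Ioi t, ENNReal.ofReal (τ ^ (m / D - 1)) * f τ)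
        ≤ ENNReal.ofReal C * X.ρ f) :
    assocNorm mIoi X.ρ
      (fun t => ENNReal.ofReal (t ^ (m / D - 1)) * (Set.Ioi (1:ℝ)).indicator 1 t) ≠ ⊤ := by
  have hμ : mIoi (Set.Ioo (0:ℝ) 1) < ⊤ := by
    rw [mIoi, Measure.restrict_apply measurableSet_Ioo]
    exact lt_of_le_of_lt (measure_mono (Set.inter_subset_left)) (by simp)
  obtain ⟨K, hK, hKle⟩ := Y.isRIBFN.loc_emb (Set.Ioo 0 1) measurableSet_Ioo hμ
  have hle : assocNorm mIoi X.ρ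
      (fun t => ENNReal.ofReal (t ^ (m / D - 1)) * (Set.Ioi (1:ℝ)).indicator 1 t)
      ≤ K * ENNReal.ofReal C := by
    rw [assocNorm]
    refine iSup₂_le ?_
    rintro f ⟨hfm, hfρ⟩
    set F : ℝ → ℝ≥0∞ := fun t => ∫⁻ τ in Set.Ioi t, ENNReal.ofReal (τ ^ (m / D - 1)) * f τ
      with hFdef
    have hFanti : Antitone F := fun s t hst =>
      lintegral_mono_set (Set.Ioi_subset_Ioi hst)
    have hI : (∫⁻ x, f x * (ENNReal.ofReal (x ^ (m / D - 1)) * (Set.Ioi (1:ℝ)).indicator 1 x) ∂mIoi)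
        = ∫⁻ x in Set.Ioi (1:ℝ), ENNReal.ofReal (x ^ (m / D - 1)) * f x := by
      have heq : ∀ x, f x * (ENNReal.ofReal (x ^ (m / D - 1)) * (Set.Ioi (1:ℝ)).indicator 1 x)
          = (Set.Ioi (1:ℝ)).indicator (fun x => ENNReal.ofReal (x ^ (m / D - 1)) * f x) x := by
        intro x
        by_cases hx : x ∈ Set.Ioi (1:ℝ) <;>
          simp [Set.indicator_of_mem, Set.indicator_of_notMem, hx, mul_comm]
      simp_rw [heq]
      rw [lintegral_indicator measurableSet_Ioi, mIoi, Measure.restrict_restrict measurableSet_Ioi]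
      congr 1
      rw [Set.Ioi_inter_Ioi]
      norm_num
    rw [hI]
    set I := ∫⁻ x in Set.Ioi (1:ℝ), ENNReal.ofReal (x ^ (m / D - 1)) * f x with hIdef
    have h1 : I = ∫⁻ _ in Set.Ioo (0:ℝ) 1, I ∂mIoi := by
      rw [setLIntegral_const, mIoi, Measure.restrict_apply measurableSet_Ioo]
      have : Set.Ioo (0:ℝ) 1 ∩ Set.Ioi 0 = Set.Ioo 0 1 :=
        Set.inter_eq_left.2 fun x hx => hx.1
      rw [this, Real.volume_Ioo]
      norm_num
    have h2 : ∫⁻ t in Set.Ioo (0:ℝ) 1, I ∂mIoi ≤ ∫⁻ t in Set.Ioo (0:ℝ) 1, F t ∂mIoi := by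
      refine setLIntegral_mono hFanti.measurable ?_
      intro t ht
      exact lintegral_mono_set (Set.Ioi_subset_Ioi ht.2.le)
    have h3 : ∫⁻ t in Set.Ioo (0:ℝ) 1, F t ∂mIoi ≤ K * Y.ρ F := hKle F
    have h4 : Y.ρ F ≤ ENNReal.ofReal C * X.ρ f := h f hfm
    calc I = ∫⁻ _ in Set.Ioo (0:ℝ) 1, I ∂mIoi := h1
      _ ≤ ∫⁻ t in Set.Ioo (0:ℝ) 1, F t ∂mIoi := h2
      _ ≤ K * Y.ρ F := h3
      _ ≤ K * (ENNReal.ofReal C * X.ρ f) := mul_le_mul_right h4 K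
      _ ≤ K * (ENNReal.ofReal C * 1) := by
          exact mul_le_mul_right (mul_le_mul_right hfρ _) K
      _ = K * ENNReal.ofReal C := by rw [mul_one]
  exact ne_top_of_le_ne_top (ENNReal.mul_ne_top hK ENNReal.ofReal_ne_top) hle
end
end

section
/- Let Σ be an open convex cone in ℝⁿ with α-homogeneous weight w and D = n + α. The map σ : Σ → [0, ∞) defined by σ(x) = B_μ |x|^D, where B_μ = μ({x ∈ Σ : |x| ≤ 1}), is a measure-preserving transformation from (Σ, μ) to ([0, ∞), Lebesgue): for every Lebesgue-measurable A ⊆ [0, ∞), μ(σ^{-1}(A)) = λ(A). -/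
open MeasureTheory Set Filter Topology ENNReal NNReal

noncomputable section

open scoped Pointwise in
/-- Scaling of the weighted cone measure: `μ (r • E) = r ^ D * μ E`. -/
lemma ConeSetting.mu_smul_set {n : ℕ} (cs : ConeSetting n) {r : ℝ} (hr : 0 < r)
    {E : Set (Euc n)} (hE : MeasurableSet E) :
    cs.μ (r • E) = ENNReal.ofReal (r ^ cs.D) * cs.μ E := by
  have hr0 : r ≠ 0 := hr.ne'
  have hSsmul : r • cs.S = cs.S := by
    apply Set.Subset.antisymm
    · rintro _ ⟨x, hx, rfl⟩; exact cs.cone x hx r hr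
    · intro x hx
      exact ⟨r⁻¹ • x, cs.cone x hx r⁻¹ (inv_pos.2 hr), by
        simp [smul_smul, mul_inv_cancel₀ hr0]⟩
  have hSmeas : MeasurableSet cs.S := cs.isOpen.measurableSet
  have hrE : MeasurableSet (r • E) := hE.const_smul₀ r
  have hES : MeasurableSet (E ∩ cs.S) := hE.inter hSmeas
  have hrES : MeasurableSet (r • (E ∩ cs.S)) := hES.const_smul₀ r
  have hmap : (volume : Measure (Euc n)).map (fun x => r • x) =
      ENNReal.ofReal (r⁻¹ ^ n) • volume := by
    ext s hs
    rw [Measure.map_apply (measurable_const_smul r) hs, Set.preimage_smul₀ hr0,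
      Measure.smul_apply, smul_eq_mul, Measure.addHaar_smul]
    congr 2
    rw [finrank_euclideanSpace_fin, abs_of_pos (by positivity)]
  have hvol : (volume : Measure (Euc n)) =
      ENNReal.ofReal (r ^ n) • ((volume : Measure (Euc n)).map (fun x => r • x)) := by
    rw [hmap, smul_smul, ← ENNReal.ofReal_mul (by positivity), ← mul_pow,
      mul_inv_cancel₀ hr0, one_pow, ENNReal.ofReal_one, one_smul]
  have hpt : ∀ y : Euc n,
      ((r • (E ∩ cs.S)).indicator (fun x => ENNReal.ofReal (cs.w x))) (r • y)
        = ENNReal.ofReal (r ^ cs.α) *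
          ((E ∩ cs.S).indicator (fun x => ENNReal.ofReal (cs.w x))) y := by
    intro y
    by_cases hy : y ∈ E ∩ cs.S
    · rw [Set.indicator_of_mem (Set.smul_mem_smul_set hy), Set.indicator_of_mem hy,
        cs.w_hom y (subset_closure hy.2) r hr,
        ENNReal.ofReal_mul (by positivity)]
    · rw [Set.indicator_of_notMem, Set.indicator_of_notMem hy, mul_zero]
      exact fun h => hy ((smul_mem_smul_set_iff₀ hr0 _ _).1 h)
  calc cs.μ (r • E)
      = ∫⁻ x in ((r • E) ∩ cs.S), ENNReal.ofReal (cs.w x) ∂volume := by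
        rw [ConeSetting.μ, withDensity_apply _ hrE, Measure.restrict_restrict hrE]
    _ = ∫⁻ x, ((r • (E ∩ cs.S)).indicator (fun x => ENNReal.ofReal (cs.w x))) x ∂volume := by
        rw [lintegral_indicator hrES]
        congr 1
        rw [Set.smul_set_inter₀ hr0, hSsmul]
    _ = ENNReal.ofReal (r ^ n) *
        ∫⁻ y, ((r • (E ∩ cs.S)).indicator (fun x => ENNReal.ofReal (cs.w x))) (r • y)
          ∂volume := by
        conv_lhs => rw [hvol]
        rw [lintegral_smul_measure]
        exact congrArg (ENNReal.ofReal (r ^ n) * ·)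
          (lintegral_map_equiv _ (MeasurableEquiv.smul₀ r hr0))
    _ = ENNReal.ofReal (r ^ n) * (ENNReal.ofReal (r ^ cs.α) *
        ∫⁻ y, ((E ∩ cs.S).indicator (fun x => ENNReal.ofReal (cs.w x))) y ∂volume) := by
        simp_rw [hpt]
        rw [lintegral_const_mul' _ _ ENNReal.ofReal_ne_top]
    _ = ENNReal.ofReal (r ^ cs.D) * cs.μ E := by
        rw [lintegral_indicator hES, ← Measure.restrict_restrict hE,
          ← withDensity_apply _ hE, ← mul_assoc,
          ← ENNReal.ofReal_mul (by positivity)]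
        congr 3
        rw [← Real.rpow_natCast r n, ← Real.rpow_add hr]
        rfl

/-- Scaling for balls: `μ {‖y‖ ≤ r} = r ^ D * μ {‖y‖ ≤ 1}`. -/
lemma ConeSetting.mu_closedBall {n : ℕ} (cs : ConeSetting n) {r : ℝ} (hr : 0 < r) :
    cs.μ (Metric.closedBall 0 r) =
      ENNReal.ofReal (r ^ cs.D) * cs.μ (Metric.closedBall 0 1) := by
  rw [← cs.mu_smul_set hr measurableSet_closedBall]
  congr 1
  rw [smul_closedBall _ _ zero_le_one, smul_zero, Real.norm_eq_abs, abs_of_pos hr, mul_one]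

/-- The measure of the unit ball is finite. -/
lemma ConeSetting.mu_closedBall_ne_top {n : ℕ} (cs : ConeSetting n) :
    cs.μ (Metric.closedBall 0 1) ≠ ⊤ := by
  have hSmeas : MeasurableSet cs.S := cs.isOpen.measurableSet
  have hK : IsCompact (closure cs.S ∩ Metric.closedBall (0 : Euc n) 1) :=
    (isCompact_closedBall _ _).inter_left isClosed_closure
  obtain ⟨M, hM⟩ := hK.exists_bound_of_continuousOn (cs.w_cont.mono Set.inter_subset_left)
  have hmeasB : MeasurableSet (Metric.closedBall (0 : Euc n) 1 ∩ cs.S) :=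
    measurableSet_closedBall.inter hSmeas
  have key : cs.μ (Metric.closedBall 0 1) ≤
      ENNReal.ofReal M * volume (Metric.closedBall (0 : Euc n) 1 ∩ cs.S) := by
    rw [ConeSetting.μ, withDensity_apply _ measurableSet_closedBall,
      Measure.restrict_restrict measurableSet_closedBall, ← setLIntegral_const,
      ← lintegral_indicator hmeasB, ← lintegral_indicator hmeasB]
    refine lintegral_mono fun x => ?_
    by_cases hx : x ∈ Metric.closedBall (0 : Euc n) 1 ∩ cs.S
    · rw [Set.indicator_of_mem hx, Set.indicator_of_mem hx]
      have hb := hM x ⟨subset_closure hx.2, hx.1⟩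
      rw [Real.norm_eq_abs] at hb
      exact ENNReal.ofReal_le_ofReal ((le_abs_self _).trans hb)
    · rw [Set.indicator_of_notMem hx, Set.indicator_of_notMem hx]
  refine (key.trans_lt (ENNReal.mul_lt_top ENNReal.ofReal_lt_top ?_)).ne
  exact (measure_mono Set.inter_subset_left).trans_lt measure_closedBall_lt_top

/-- The measure of the unit ball is positive. -/
lemma ConeSetting.mu_closedBall_ne_zero {n : ℕ} (cs : ConeSetting n) :
    cs.μ (Metric.closedBall 0 1) ≠ 0 := by
  obtain ⟨x₀, hx₀S, hx₀⟩ := cs.w_ne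
  have hx₀pos : 0 < cs.w x₀ := lt_of_le_of_ne (cs.w_nonneg x₀ hx₀S) (Ne.symm hx₀)
  set c : ℝ := cs.w x₀ / 2 with hc
  have hcpos : 0 < c := by positivity
  -- find an open set `U ∋ x₀` on which `w > c` (within `closure S`)
  have hev : cs.w ⁻¹' Set.Ioi c ∈ nhdsWithin x₀ (closure cs.S) :=
    (cs.w_cont x₀ hx₀S) (Ioi_mem_nhds (half_lt_self hx₀pos))
  rw [mem_nhdsWithin] at hev
  obtain ⟨U, hUopen, hx₀U, hU⟩ := hev
  -- `U ∩ S` is nonempty and open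
  obtain ⟨y, hyU, hyS⟩ := mem_closure_iff.1 hx₀S U hUopen hx₀U
  obtain ⟨ε, hεpos, hball⟩ := Metric.isOpen_iff.1 (hUopen.inter cs.isOpen) y ⟨hyU, hyS⟩
  -- the ball has positive measure
  have hball_sub : Metric.ball y ε ⊆ cs.S := fun z hz => (hball hz).2
  have hlow : ENNReal.ofReal c * volume (Metric.ball y ε) ≤ cs.μ (Metric.ball y ε) := by
    rw [ConeSetting.μ, withDensity_apply _ measurableSet_ball,
      Measure.restrict_restrict measurableSet_ball,
      Set.inter_eq_self_of_subset_left hball_sub, ← setLIntegral_const,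
      ← lintegral_indicator measurableSet_ball, ← lintegral_indicator measurableSet_ball]
    refine lintegral_mono fun z => ?_
    by_cases hz : z ∈ Metric.ball y ε
    · rw [Set.indicator_of_mem hz, Set.indicator_of_mem hz]
      have hcz : c < cs.w z := hU ⟨(hball hz).1, subset_closure (hball hz).2⟩
      exact ENNReal.ofReal_le_ofReal hcz.le
    · rw [Set.indicator_of_notMem hz, Set.indicator_of_notMem hz]
  have hballpos : 0 < cs.μ (Metric.ball y ε) :=
    lt_of_lt_of_le (ENNReal.mul_pos (ENNReal.ofReal_pos.2 hcpos).ne'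
      (Metric.measure_ball_pos volume y hεpos).ne') hlow
  -- enclose the ball in a big closed ball
  set R : ℝ := ‖y‖ + ε with hR
  have hRpos : 0 < R := by positivity
  have hsub : Metric.ball y ε ⊆ Metric.closedBall (0 : Euc n) R := by
    intro z hz
    rw [Metric.mem_closedBall, dist_zero_right]
    have := (norm_sub_norm_le z y).trans (le_of_lt (by
      simpa [dist_eq_norm] using Metric.mem_ball.1 hz))
    linarith
  intro h0
  have hz : cs.μ (Metric.closedBall 0 R) = 0 := by
    rw [cs.mu_closedBall hRpos, h0, mul_zero]
  exact hballpos.ne' (le_antisymm (hz ▸ measure_mono hsub) zero_le)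

/-- The map `σ(x) = B_μ |x|^D`, with `B_μ = μ {x ∈ Σ : |x| ≤ 1}`, is a
measure-preserving transformation from `(Σ, μ)` to `([0, ∞), λ)`. -/
theorem sigma_measure_preserving {n : ℕ} (cs : ConeSetting n) :
    ∀ A : Set ℝ, MeasurableSet A → A ⊆ Set.Ici 0 →
      cs.μ ((fun x : Euc n =>
          (cs.μ {y : Euc n | ‖y‖ ≤ 1}).toReal * ‖x‖ ^ cs.D) ⁻¹' A) = volume A := by
  have hD : 0 < cs.D := by
    have : (0:ℝ) ≤ n := Nat.cast_nonneg n
    have := cs.alpha_pos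
    unfold ConeSetting.D
    linarith
  have hset : {y : Euc n | ‖y‖ ≤ 1} = Metric.closedBall (0 : Euc n) 1 := by
    ext y; simp [Metric.mem_closedBall, dist_zero_right]
  set Bval : ℝ≥0∞ := cs.μ {y : Euc n | ‖y‖ ≤ 1} with hBval
  have hBtop : Bval ≠ ⊤ := by rw [hBval, hset]; exact cs.mu_closedBall_ne_top
  have hB0 : Bval ≠ 0 := by rw [hBval, hset]; exact cs.mu_closedBall_ne_zero
  set Breal : ℝ := Bval.toReal with hBreal
  have hBr : 0 < Breal := ENNReal.toReal_pos hB0 hBtop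
  have hBofReal : ENNReal.ofReal Breal = Bval := ENNReal.ofReal_toReal hBtop
  set σ : Euc n → ℝ := fun x => Breal * ‖x‖ ^ cs.D with hσ
  have hσc : Continuous σ :=
    continuous_const.mul ((Real.continuous_rpow_const hD.le).comp continuous_norm)
  have hσm : Measurable σ := hσc.measurable
  have hσnonneg : ∀ x, 0 ≤ σ x := fun x =>
    mul_nonneg hBr.le (Real.rpow_nonneg (norm_nonneg x) _)
  -- the key computation on half-lines
  have hIic : ∀ t : ℝ, cs.μ (σ ⁻¹' Set.Iic t) = (volume.restrict (Set.Ici 0)) (Set.Iic t) := by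
    intro t
    rw [Measure.restrict_apply measurableSet_Iic]
    rcases lt_or_ge t 0 with ht | ht
    · have h1 : σ ⁻¹' Set.Iic t = ∅ := by
        ext x
        simp only [Set.mem_preimage, Set.mem_Iic, Set.mem_empty_iff_false, iff_false, not_le]
        exact ht.trans_le (hσnonneg x)
      have h2 : Set.Iic t ∩ Set.Ici (0:ℝ) = ∅ := by
        ext x
        simp only [Set.mem_inter_iff, Set.mem_Iic, Set.mem_Ici, Set.mem_empty_iff_false,
          iff_false, not_and, not_le]
        intro hx; exact lt_of_le_of_lt hx ht
      rw [h1, h2, measure_empty, measure_empty]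
    · have h2 : Set.Iic t ∩ Set.Ici (0:ℝ) = Set.Icc 0 t := by
        ext x; simp [Set.mem_Icc, and_comm]
      rw [h2, Real.volume_Icc]
      have hpre : σ ⁻¹' Set.Iic t = Metric.closedBall 0 ((t / Breal) ^ cs.D⁻¹) := by
        ext x
        rw [Set.mem_preimage, Set.mem_Iic, Metric.mem_closedBall, dist_zero_right, hσ]
        rw [Real.le_rpow_inv_iff_of_pos (norm_nonneg x) (div_nonneg ht hBr.le) hD]
        rw [le_div_iff₀ hBr, mul_comm]
      rw [hpre]
      rcases eq_or_lt_of_le ht with rfl | htpos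
      · have : (0 / Breal) ^ cs.D⁻¹ = (0:ℝ) := by
          rw [zero_div, Real.zero_rpow (inv_ne_zero hD.ne')]
        rw [this]
        rw [Metric.closedBall_zero]
        haveI : Nontrivial (Euc n) := by
          have hn : 0 < n := lt_of_lt_of_le (by norm_num) cs.dim_ge
          refine nontrivial_of_ne (EuclideanSpace.single (⟨0, hn⟩ : Fin n) (1:ℝ)) 0 ?_
          intro h
          have h1 : ‖(EuclideanSpace.single (⟨0, hn⟩ : Fin n) (1:ℝ) : Euc n)‖ = 1 := by
            simp [EuclideanSpace.norm_single]
          rw [h, norm_zero] at h1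
          exact one_ne_zero h1.symm
        have h0 : cs.μ {(0 : Euc n)} = 0 := by
          refine withDensity_absolutelyContinuous (volume.restrict cs.S) _ ?_
          exact le_antisymm ((Measure.restrict_apply_le _ _).trans_eq (measure_singleton 0))
            zero_le
        rw [ConeSetting.μ] at h0
        rw [ConeSetting.μ, h0]
        simp
      · have hrpos : 0 < (t / Breal) ^ cs.D⁻¹ :=
          Real.rpow_pos_of_pos (div_pos htpos hBr) _
        rw [cs.mu_closedBall hrpos, ← hset, ← hBval,
          Real.rpow_inv_rpow (div_nonneg ht hBr.le) hD.ne', ← hBofReal,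
          ← ENNReal.ofReal_mul (div_nonneg ht hBr.le), div_mul_cancel₀ _ hBr.ne']
        rw [sub_zero]
  -- finiteness of `μ ∘ σ⁻¹` on half-lines
  have hfin : ∀ t : ℝ, cs.μ (σ ⁻¹' Set.Iic t) ≠ ⊤ := by
    intro t
    rw [hIic t, Measure.restrict_apply measurableSet_Iic]
    have hsub : Set.Iic t ∩ Set.Ici (0:ℝ) ⊆ Set.Icc 0 t := fun x hx => ⟨hx.2, hx.1⟩
    exact ((measure_mono hsub).trans_lt (by rw [Real.volume_Icc]; exact ENNReal.ofReal_lt_top)).ne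
  set ν : Measure ℝ := cs.μ.map σ with hν
  have hνIic : ∀ t, ν (Set.Iic t) = (volume.restrict (Set.Ici 0)) (Set.Iic t) := by
    intro t; rw [hν, Measure.map_apply hσm measurableSet_Iic]; exact hIic t
  have hνfin : ∀ t, ν (Set.Iic t) ≠ ⊤ := by
    intro t; rw [hν, Measure.map_apply hσm measurableSet_Iic]; exact hfin t
  have hVfin : ∀ t : ℝ, (volume.restrict (Set.Ici (0:ℝ))) (Set.Iic t) ≠ ⊤ := by
    intro t; rw [← hνIic t]; exact hνfin t
  have hext : ν = volume.restrict (Set.Ici 0) := by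
    refine Measure.ext_of_Ioc' ν _ (fun a b hab => ?_) (fun a b hab => ?_)
    · exact ((measure_mono Set.Ioc_subset_Iic_self).trans_lt
        (lt_top_iff_ne_top.2 (hνfin b))).ne
    · rw [← Set.Iic_sdiff_Iic,
        measure_diff (Set.Iic_subset_Iic.2 hab.le) nullMeasurableSet_Iic (hνfin a),
        measure_diff (Set.Iic_subset_Iic.2 hab.le) nullMeasurableSet_Iic (hVfin a),
        hνIic a, hνIic b]
  intro A hA hA0
  have hmap : cs.μ (σ ⁻¹' A) = ν A := (Measure.map_apply hσm hA).symm
  rw [hmap, hext, Measure.restrict_apply hA, Set.inter_eq_self_of_subset_left hA0]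
end
end
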